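/- arXiv:2007.00624 — 2 statements merged into one kernel-verified Lean document; each statement's English description precedes it below -/
import Mathlib

section
/- For a clone (S, C), if for every sequence X₁,…,Xₙ of sorts there exists a chosen object ⊗ₙ(X₁,…,Xₙ) and a representable multimap ρ : X₁,…,Xₙ → ⊗ₙ(X₁,…,Xₙ), then representable multimaps in the associated multicategory are closed under composition; in particular the composite of the representable arrows ρ_{X⃗}, ρ_{Y⃗}, and ρ for the pair (⊗ₙX⃗, ⊗ₘY⃗) is again representable. -/
/-!
STATEMENT 4: In a clone equipped with chosen representable multimaps
`ρ : X₁,…,Xₙ → ⊗ₙ(X₁,…,Xₙ)` for every sequence, representable multimaps are closed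
under composition: the composite `ρ[ρ_X⃗ ⊠ ρ_Y⃗]` of the representable arrows for
`X⃗`, `Y⃗` and the pair `(⊗ₙX⃗, ⊗ₘY⃗)` is again representable.
-/

universe u v

structure Clone (S : Type u) where
  hom : ∀ {n : ℕ}, (Fin n → S) → S → Type v
  proj : ∀ {n : ℕ} (X : Fin n → S) (i : Fin n), hom X (X i)
  subst : ∀ {n m : ℕ} {X : Fin n → S} {Y : Fin m → S} {B : S},
    hom X B → (∀ i, hom Y (X i)) → hom Y B
  subst_proj : ∀ {n m : ℕ} (X : Fin n → S) (Y : Fin m → S) (i : Fin n)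
    (g : ∀ j, hom Y (X j)), subst (proj X i) g = g i
  subst_id : ∀ {n : ℕ} {X : Fin n → S} {B : S} (f : hom X B),
    subst f (proj X) = f
  subst_assoc : ∀ {n m k : ℕ} {X : Fin n → S} {Y : Fin m → S} {Z : Fin k → S} {B : S}
    (f : hom X B) (g : ∀ i, hom Y (X i)) (h : ∀ j, hom Z (Y j)),
    subst (subst f g) h = subst f (fun i => subst (g i) h)

def unCtx {S : Type u} (A : S) : Fin 1 → S := fun _ => A

/-- A multimap `ρ : X₁,…,Xₙ → R` is representable if precomposition with it induces a
bijection `C(R; A) ≅ C(X₁,…,Xₙ; A)` for every sort `A`. -/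
def Clone.IsRepresentable {S : Type u} (C : Clone S) {n : ℕ} {X : Fin n → S} {R : S}
    (ρ : C.hom X R) : Prop :=
  ∀ A : S, Function.Bijective (fun h : C.hom (unCtx R) A => C.subst h (fun _ => ρ))

/-- A clone with a chosen object `⊗ₙ(X₁,…,Xₙ)` and representable multimap
`ρ : X₁,…,Xₙ → ⊗ₙ(X₁,…,Xₙ)` for every sequence of sorts. -/
structure RepClone (S : Type u) extends Clone S where
  tensor : ∀ {n : ℕ}, (Fin n → S) → S
  rho : ∀ {n : ℕ} (X : Fin n → S), hom X (tensor X)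
  representable : ∀ {n : ℕ} (X : Fin n → S), toClone.IsRepresentable (rho X)

/-- The first component of `ρ_X⃗ ⊠ ρ_Y⃗`: the representable arrow `ρ_X⃗` precomposed with
the projections of the concatenated context `X₁,…,Xₙ,Y₁,…,Yₘ` picking out the `X`s. -/
def boxL {S : Type u} (C : RepClone S) {n m : ℕ} (X : Fin n → S) (Y : Fin m → S) :
    C.hom (Fin.append X Y) (C.tensor X) :=
  C.subst (C.rho X)
    (fun j => (Fin.append_left X Y j) ▸ C.proj (Fin.append X Y) (Fin.castAdd m j))

/-- The second component of `ρ_X⃗ ⊠ ρ_Y⃗`. -/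
def boxR {S : Type u} (C : RepClone S) {n m : ℕ} (X : Fin n → S) (Y : Fin m → S) :
    C.hom (Fin.append X Y) (C.tensor Y) :=
  C.subst (C.rho Y)
    (fun j => (Fin.append_right X Y j) ▸ C.proj (Fin.append X Y) (Fin.natAdd n j))

/-- The pairing `ρ_X⃗ ⊠ ρ_Y⃗ : X₁,…,Xₙ,Y₁,…,Yₘ → (⊗ₙX⃗, ⊗ₘY⃗)`. -/
def boxPair {S : Type u} (C : RepClone S) {n m : ℕ} (X : Fin n → S) (Y : Fin m → S) :
    ∀ i : Fin 2, C.hom (Fin.append X Y) ((![C.tensor X, C.tensor Y]) i) :=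
  Fin.cases (boxL C X Y) (Fin.cases (boxR C X Y) (fun j => j.elim0))

/-!
A multimap `ρ : X₁,…,Xₙ → R` of a clone is representable exactly when the one-element
substitution `ρ` is invertible in the category of contexts and substitutions; the inverse
has as components the preimages `πᵢ : R → Xᵢ` of the projections. Concatenation of contexts
is a product in that category, so the pairing `ρ_X⃗ ⊠ ρ_Y⃗` of two invertible arrows is
invertible, with inverse `(π_X⃗[p₀], π_Y⃗[p₁])`. The composite `ρ[ρ_X⃗ ⊠ ρ_Y⃗]` is then a
composite of invertible substitutions.
-/

namespace Clone

variable {S : Type u} (C : Clone S) {k m n : ℕ} {X : Fin n → S} {Y : Fin m → S}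
  {Z : Fin k → S}

/-- Composition of substitutions: `f : Y ⇒ X` after `g : Z ⇒ Y`. -/
def comp (f : ∀ i, C.hom Y (X i)) (g : ∀ j, C.hom Z (Y j)) : ∀ i, C.hom Z (X i) :=
  fun i => C.subst (f i) g

def single {R : S} (ρ : C.hom X R) : ∀ i, C.hom X (unCtx R i) :=
  fun _ => ρ

variable {C}

lemma subst_subst {B : S} (h : C.hom X B) (f : ∀ i, C.hom Y (X i)) (g : ∀ j, C.hom Z (Y j)) :
    C.subst (C.subst h f) g = C.subst h (C.comp f g) :=
  C.subst_assoc h f g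

lemma comp_assoc {l : ℕ} {W : Fin l → S} (f : ∀ i, C.hom Y (X i)) (g : ∀ j, C.hom Z (Y j))
    (h : ∀ j, C.hom W (Z j)) : C.comp (C.comp f g) h = C.comp f (C.comp g h) :=
  funext fun i => C.subst_subst (f i) g h

lemma proj_comp (g : ∀ j, C.hom Y (X j)) : C.comp (C.proj X) g = g :=
  funext fun i => C.subst_proj X Y i g

lemma subst_cast {B B' : S} (e : B = B') (f : C.hom X B) (g : ∀ i, C.hom Y (X i)) :
    C.subst (e ▸ f) g = e ▸ C.subst f g := by
  cases e; rfl

variable (C) in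
def IsInvertible (f : ∀ i, C.hom Y (X i)) : Prop :=
  ∃ g : ∀ j, C.hom X (Y j), C.comp f g = C.proj X ∧ C.comp g f = C.proj Y

lemma IsInvertible.comp {f : ∀ i, C.hom Y (X i)} {g : ∀ j, C.hom Z (Y j)}
    (hf : C.IsInvertible f) (hg : C.IsInvertible g) : C.IsInvertible (C.comp f g) := by
  obtain ⟨f', hff', hf'f⟩ := hf
  obtain ⟨g', hgg', hg'g⟩ := hg
  refine ⟨C.comp g' f', ?_, ?_⟩
  · rw [comp_assoc, ← comp_assoc g, hgg', proj_comp, hff']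
  · rw [comp_assoc, ← comp_assoc f', hf'f, proj_comp, hg'g]

lemma IsInvertible.bijective_subst {f : ∀ i, C.hom Y (X i)} (hf : C.IsInvertible f) (A : S) :
    Function.Bijective fun h : C.hom X A => C.subst h f := by
  obtain ⟨g, hfg, hgf⟩ := hf
  refine Function.bijective_iff_has_inverse.mpr ⟨fun h => C.subst h g, fun h => ?_, fun h => ?_⟩
  · change C.subst (C.subst h f) g = h
    rw [subst_subst, hfg, C.subst_id]
  · change C.subst (C.subst h g) f = h
    rw [subst_subst, hgf, C.subst_id]

lemma isRepresentable_iff_isInvertible {R : S} (ρ : C.hom X R) :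
    C.IsRepresentable ρ ↔ C.IsInvertible (C.single ρ) := by
  refine ⟨fun hρ => ?_, fun hρ => hρ.bijective_subst⟩
  choose π hπ using fun j => (hρ (X j)).2 (C.proj X j)
  have hπρ : C.comp π (C.single ρ) = C.proj X := funext hπ
  refine ⟨π, funext fun i => (hρ R).1 ?_, hπρ⟩
  calc C.subst (C.subst ρ π) (C.single ρ)
      = C.subst ρ (C.comp π (C.single ρ)) := C.subst_subst ρ π (C.single ρ)
    _ = ρ := by rw [hπρ, C.subst_id]
    _ = C.subst (B := R) (C.proj (unCtx R) i) (C.single ρ) :=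
      (C.subst_proj (unCtx R) X i (C.single ρ)).symm

lemma subst_comp_single_of_comp_eq_proj {A : S} {f : C.hom X A}
    {π : ∀ j, C.hom (unCtx A) (X j)} (h : C.comp (C.single f) π = C.proj (unCtx A))
    (q : C.hom Z A) : C.subst f (C.comp π (C.single q)) = q := by
  rw [← subst_subst]
  change C.comp (C.comp (C.single f) π) (C.single q) 0 = q
  rw [h, proj_comp]
  rfl

section Append

variable (C X Y)

def inl : ∀ i, C.hom (Fin.append X Y) (X i) :=
  fun i => Fin.append_left X Y i ▸ C.proj (Fin.append X Y) (Fin.castAdd m i)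

def inr : ∀ j, C.hom (Fin.append X Y) (Y j) :=
  fun j => Fin.append_right X Y j ▸ C.proj (Fin.append X Y) (Fin.natAdd n j)

variable {C X Y}

def appendCases (f : ∀ i, C.hom Z (X i)) (g : ∀ j, C.hom Z (Y j)) :
    ∀ l, C.hom Z (Fin.append X Y l) :=
  Fin.addCases (fun i => (Fin.append_left X Y i).symm ▸ f i)
    (fun j => (Fin.append_right X Y j).symm ▸ g j)

lemma inl_comp_appendCases (f : ∀ i, C.hom Z (X i)) (g : ∀ j, C.hom Z (Y j)) :
    C.comp (C.inl X Y) (C.appendCases f g) = f := by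
  funext i
  simp only [comp, inl]
  rw [subst_cast, C.subst_proj]
  simp [appendCases, eqRec_eq_cast]

lemma inr_comp_appendCases (f : ∀ i, C.hom Z (X i)) (g : ∀ j, C.hom Z (Y j)) :
    C.comp (C.inr X Y) (C.appendCases f g) = g := by
  funext j
  simp only [comp, inr]
  rw [subst_cast, C.subst_proj]
  simp [appendCases, eqRec_eq_cast]

lemma appendCases_comp {l : ℕ} {W : Fin l → S} (f : ∀ i, C.hom Z (X i))
    (g : ∀ j, C.hom Z (Y j)) (h : ∀ j, C.hom W (Z j)) :
    C.comp (C.appendCases f g) h = C.appendCases (C.comp f h) (C.comp g h) := by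
  funext l
  induction l using Fin.addCases <;> simp [comp, appendCases, subst_cast]

lemma appendCases_inl_inr :
    C.appendCases (C.inl X Y) (C.inr X Y) = C.proj (Fin.append X Y) := by
  funext l
  induction l using Fin.addCases <;> simp [appendCases, inl, inr, eqRec_eq_cast]

/-- The pairing `f ⊠ g`; `boxPair C X Y` unfolds to `pair (rho X) (rho Y)`. -/
def pair {A B : S} (f : C.hom X A) (g : C.hom Y B) :
    ∀ i : Fin 2, C.hom (Fin.append X Y) (![A, B] i) :=
  Fin.cases (C.subst f (C.inl X Y)) (Fin.cases (C.subst g (C.inr X Y)) fun j => j.elim0)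

lemma IsInvertible.pair {A B : S} {f : C.hom X A} {g : C.hom Y B}
    (hf : C.IsInvertible (C.single f)) (hg : C.IsInvertible (C.single g)) :
    C.IsInvertible (C.pair f g) := by
  obtain ⟨πf, hfπ, hπf⟩ := hf
  obtain ⟨πg, hgπ, hπg⟩ := hg
  let p₀ := C.single (X := ![A, B]) (R := A) (C.proj ![A, B] 0)
  let p₁ := C.single (X := ![A, B]) (R := B) (C.proj ![A, B] 1)
  refine ⟨C.appendCases (C.comp πf p₀) (C.comp πg p₁), funext fun i => ?_, ?_⟩
  · induction i using Fin.cases with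
    | zero =>
      change C.subst (C.subst f (C.inl X Y)) _ = _
      rw [subst_subst, inl_comp_appendCases]
      exact subst_comp_single_of_comp_eq_proj hfπ _
    | succ i =>
      obtain rfl : i = 0 := Subsingleton.elim i 0
      change C.subst (C.subst g (C.inr X Y)) _ = _
      rw [subst_subst, inr_comp_appendCases]
      exact subst_comp_single_of_comp_eq_proj hgπ _
  · have h₀ : C.comp p₀ (C.pair f g) = C.comp (C.single f) (C.inl X Y) :=
      funext fun _ => C.subst_proj _ _ 0 _
    have h₁ : C.comp p₁ (C.pair f g) = C.comp (C.single g) (C.inr X Y) :=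
      funext fun _ => C.subst_proj _ _ 1 _
    rw [appendCases_comp, comp_assoc, comp_assoc, h₀, h₁, ← comp_assoc, ← comp_assoc, hπf, hπg,
      proj_comp, proj_comp, appendCases_inl_inr]

end Append

end Clone

lemma RepClone.isInvertible_rho {S : Type u} (C : RepClone S) {n : ℕ} (X : Fin n → S) :
    C.toClone.IsInvertible (C.toClone.single (C.rho X)) :=
  (Clone.isRepresentable_iff_isInvertible _).mp (C.representable X)

/-- The composite
`ρ_{(⊗ₙX⃗,⊗ₘY⃗)}[ρ_X⃗ ⊠ ρ_Y⃗] : X₁,…,Xₙ,Y₁,…,Yₘ → ⊗₂(⊗ₙX⃗, ⊗ₘY⃗)` of the chosen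
representable arrows is again representable; thus representable multimaps are closed
under composition. -/
theorem repClone_composite_representable {S : Type u} (C : RepClone S) {n m : ℕ}
    (X : Fin n → S) (Y : Fin m → S) :
    C.toClone.IsRepresentable
      (C.subst (C.rho ![C.tensor X, C.tensor Y]) (boxPair C X Y)) := by
  have hpair : C.toClone.IsInvertible (boxPair C X Y) :=
    (C.isInvertible_rho X).pair (C.isInvertible_rho Y)
  exact (Clone.isRepresentable_iff_isInvertible _).mpr
    ((C.isInvertible_rho ![C.tensor X, C.tensor Y]).comp hpair)
end

section
/- A clone (S, C) is representable if and only if it is cartesian. Concretely: (⇒) given representable arrows ρ : X₁,…,Xₙ → ⊗ₙ(X₁,…,Xₙ), the multimaps πᵢ := (pᵢ)* (the unique extensions of the projections along ρ) together with the tupling ψ_Γ(f₁,…,fₙ) := ρ[f₁,…,fₙ] satisfy the cartesian clone equations; (⇐) given cartesian structure, ρ := ψ(p₁,…,pₙ) is a representable multimap. -/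
/-!
Both structures say that the context `X₁,…,Xₙ` and the unary context on one object are
isomorphic through substitution: `ρ : X → T` and `π : T → X` with `πᵢ[ρ] = pᵢ` and
`ρ[π] = id`. Such a pair makes `h ↦ h[ρ]` a bijection (with inverse `f ↦ f[π]`) and
`f ↦ ρ[f]` a tupling with projections `π`. For a cartesian structure, `ρ := ψ(p)` and
`π` are inverse by the cartesian equations and naturality of `ψ`; for a representable
one, `πᵢ` is the preimage of `pᵢ` under `h ↦ h[ρ]`, and `ρ[π] = id` follows from
injectivity of that map, since `ρ[π][ρ] = ρ = id[ρ]`.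
-/

universe u v

/-- A representable structure on a clone: chosen objects `⊗ₙ(X₁,…,Xₙ)` and multimaps
`ρ : X₁,…,Xₙ → ⊗ₙ(X₁,…,Xₙ)` such that `h ↦ h[ρ]` is a bijection
`C(⊗ₙ(X₁,…,Xₙ); A) ≅ C(X₁,…,Xₙ; A)` for every `A`. -/
structure RepStructOn {S : Type u} (C : Clone S) where
  tensor : ∀ {n : ℕ}, (Fin n → S) → S
  rho : ∀ {n : ℕ} (X : Fin n → S), C.hom X (tensor X)
  representable : ∀ {n : ℕ} (X : Fin n → S) (A : S),
    Function.Bijective (fun h : C.hom (unCtx (tensor X)) A => C.subst h (fun _ => rho X))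

/-- A cartesian structure on a clone: chosen objects `Πₙ(X₁,…,Xₙ)`, projections `πᵢ`
and tupling `ψ` with `πᵢ[ψ(f₁,…,fₙ)] = fᵢ` and `ψ(π₁[h],…,πₙ[h]) = h`. -/
structure CartStructOn {S : Type u} (C : Clone S) where
  prod : ∀ {n : ℕ}, (Fin n → S) → S
  pi : ∀ {n : ℕ} (X : Fin n → S) (i : Fin n), C.hom (unCtx (prod X)) (X i)
  tup : ∀ {n m : ℕ} {X : Fin n → S} {Y : Fin m → S},
    (∀ i, C.hom Y (X i)) → C.hom Y (prod X)
  pi_tup : ∀ {n m : ℕ} {X : Fin n → S} {Y : Fin m → S}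
    (f : ∀ i, C.hom Y (X i)) (i : Fin n),
    C.subst (pi X i) (fun _ => tup f) = f i
  tup_pi : ∀ {n m : ℕ} {X : Fin n → S} {Y : Fin m → S}
    (h : C.hom Y (prod X)),
    tup (fun i => C.subst (pi X i) (fun _ => h)) = h

namespace Clone

variable {S : Type u} (C : Clone S)

lemma proj_unCtx (T : S) : C.proj (unCtx T) = fun _ => C.proj (unCtx T) 0 := by
  funext j
  rw [Subsingleton.elim j 0]

lemma subst_assoc_unCtx {m k : ℕ} {Y : Fin m → S} {Z : Fin k → S} {T B : S}
    (f : C.hom (unCtx T) B) (g : C.hom Y T) (h : ∀ j, C.hom Z (Y j)) :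
    C.subst (C.subst f fun _ => g) h = C.subst f fun _ => C.subst g h :=
  C.subst_assoc f _ h

lemma subst_subst_of_inverse {n m : ℕ} {X : Fin n → S} {Y : Fin m → S} {A : S}
    (f : C.hom X A) {g : ∀ i, C.hom Y (X i)} {h : ∀ j, C.hom X (Y j)}
    (hgh : ∀ i, C.subst (g i) h = C.proj X i) :
    C.subst (C.subst f g) h = f := by
  rw [C.subst_assoc, funext hgh, C.subst_id]

lemma subst_bijective_of_inverse {n m : ℕ} {X : Fin n → S} {Y : Fin m → S}
    {g : ∀ i, C.hom Y (X i)} {h : ∀ j, C.hom X (Y j)}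
    (hgh : ∀ i, C.subst (g i) h = C.proj X i) (hhg : ∀ j, C.subst (h j) g = C.proj Y j)
    (A : S) : Function.Bijective (fun f : C.hom X A => C.subst f g) :=
  Function.bijective_iff_has_inverse.2
    ⟨fun f => C.subst f h, fun f => C.subst_subst_of_inverse f hgh,
      fun f => C.subst_subst_of_inverse f hhg⟩

end Clone

namespace CartStructOn

variable {S : Type u} {C : Clone S} (K : CartStructOn C)

lemma tup_subst {n m k : ℕ} {X : Fin n → S} {Y : Fin m → S} {Z : Fin k → S}
    (f : ∀ i, C.hom Y (X i)) (g : ∀ j, C.hom Z (Y j)) :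
    C.subst (K.tup f) g = K.tup (fun i => C.subst (f i) g) := by
  rw [← K.tup_pi (C.subst (K.tup f) g)]
  congr 1
  funext i
  exact (C.subst_assoc_unCtx (K.pi X i) (K.tup f) g).symm.trans
    (congrArg (C.subst · g) (K.pi_tup f i))

lemma tup_pi_eq_proj {n : ℕ} (X : Fin n → S) :
    K.tup (K.pi X) = C.proj (unCtx (K.prod X)) 0 := by
  refine Eq.trans ?_ (K.tup_pi _)
  congr 1
  funext i
  rw [← C.proj_unCtx, C.subst_id]

lemma tup_proj_subst_pi {n : ℕ} (X : Fin n → S) :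
    C.subst (K.tup (C.proj X)) (K.pi X) = C.proj (unCtx (K.prod X)) 0 := by
  simp only [K.tup_subst, C.subst_proj]
  exact K.tup_pi_eq_proj X

def toRepStructOn : RepStructOn C where
  tensor := K.prod
  rho X := K.tup (C.proj X)
  representable X :=
    C.subst_bijective_of_inverse (Fin.forall_fin_one.2 (K.tup_proj_subst_pi X))
      (K.pi_tup (C.proj X))

end CartStructOn

namespace RepStructOn

variable {S : Type u} {C : Clone S} (R : RepStructOn C)

noncomputable def pi {n : ℕ} (X : Fin n → S) (i : Fin n) : C.hom (unCtx (R.tensor X)) (X i) :=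
  Function.surjInv (R.representable X (X i)).2 (C.proj X i)

lemma pi_rho {n : ℕ} (X : Fin n → S) (i : Fin n) :
    C.subst (R.pi X i) (fun _ => R.rho X) = C.proj X i :=
  Function.surjInv_eq (R.representable X (X i)).2 (C.proj X i)

lemma rho_pi {n : ℕ} (X : Fin n → S) :
    C.subst (R.rho X) (R.pi X) = C.proj (unCtx (R.tensor X)) 0 := by
  apply (R.representable X (R.tensor X)).1
  -- retype `fun _ => R.rho X` over `unCtx`, otherwise `rw` cannot match under it
  change C.subst (C.subst (R.rho X) (R.pi X)) (fun _ => R.rho X) =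
    C.subst (C.proj (unCtx (R.tensor X)) 0) (fun _ => R.rho X)
  rw [C.subst_subst_of_inverse _ (R.pi_rho X)]
  exact (C.subst_proj (unCtx (R.tensor X)) X 0 fun _ => R.rho X).symm

lemma pi_rho_subst {n m : ℕ} {X : Fin n → S} {Y : Fin m → S}
    (f : ∀ i, C.hom Y (X i)) (i : Fin n) :
    C.subst (R.pi X i) (fun _ => C.subst (R.rho X) f) = f i := by
  rw [← C.subst_assoc_unCtx, R.pi_rho, C.subst_proj]

lemma rho_subst_pi {n m : ℕ} {X : Fin n → S} {Y : Fin m → S}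
    (h : C.hom Y (R.tensor X)) :
    C.subst (R.rho X) (fun i => C.subst (R.pi X i) (fun _ => h)) = h := by
  calc _ = C.subst (C.subst (R.rho X) (R.pi X)) (fun _ => h) := (C.subst_assoc _ _ _).symm
    _ = h := by rw [R.rho_pi]; exact C.subst_proj _ _ 0 _

noncomputable def toCartStructOn : CartStructOn C where
  prod := R.tensor
  pi := R.pi
  tup f := C.subst (R.rho _) f
  pi_tup := R.pi_rho_subst
  tup_pi := R.rho_subst_pi

end RepStructOn

/-- A clone is representable iff it is cartesian. Concretely:
(⇒) given a representable structure, there are multimaps `πᵢ` with `πᵢ[ρ] = pᵢ`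
(the unique extensions of the projections along `ρ`) which, together with the tupling
`ψ(f₁,…,fₙ) := ρ[f₁,…,fₙ]`, satisfy the cartesian clone equations;
(⇐) given a cartesian structure, `ρ := ψ(p₁,…,pₙ)` is a representable multimap. -/
theorem clone_representable_iff_cartesian {S : Type u} (C : Clone S) :
    (Nonempty (RepStructOn C) ↔ Nonempty (CartStructOn C)) ∧
    (∀ R : RepStructOn C, ∀ {n : ℕ} (X : Fin n → S),
      ∃ π : ∀ i : Fin n, C.hom (unCtx (R.tensor X)) (X i),
        (∀ i, C.subst (π i) (fun _ => R.rho X) = C.proj X i) ∧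
        (∀ {m : ℕ} (Y : Fin m → S) (f : ∀ i, C.hom Y (X i)) (i : Fin n),
          C.subst (π i) (fun _ => C.subst (R.rho X) f) = f i) ∧
        (∀ {m : ℕ} (Y : Fin m → S) (h : C.hom Y (R.tensor X)),
          C.subst (R.rho X) (fun i => C.subst (π i) (fun _ => h)) = h)) ∧
    (∀ K : CartStructOn C, ∀ {n : ℕ} (X : Fin n → S) (A : S),
      Function.Bijective
        (fun h : C.hom (unCtx (K.prod X)) A =>
          C.subst h (fun _ => K.tup (C.proj X)))) :=
  ⟨⟨fun ⟨R⟩ => ⟨R.toCartStructOn⟩, fun ⟨K⟩ => ⟨K.toRepStructOn⟩⟩,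
    fun R {_} X => ⟨R.pi X, R.pi_rho X, fun _ => R.pi_rho_subst, fun _ => R.rho_subst_pi⟩,
    fun K {_} X => K.toRepStructOn.representable X⟩
end
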